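/- Let Ξ(N; ρ_E) = (ϖ₁/ρ_A)·(Q^{−1}(δ)/(2√N) + (B/N)ln 2)·(1 + K_E·ρ_A·ρ_E/(ϖ₁ρ_E + ρ_A)) − 1, where ϖ₁ = exp(Q^{−1}(δ)/√N + (B/N)ln 2). Then for fixed N, Ξ is strictly increasing in ρ_E, strictly increasing in K_E, and strictly increasing in B; consequently, since Ξ is strictly decreasing in N, the unique root N* of Ξ(·) = 0 is strictly increasing in each of ρ_E, K_E, and B. -/
import Mathlib


open Real Set

/-- The Gaussian Q-function. -/
noncomputable def gaussQ (z : ℝ) : ℝ :=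
  ∫ t in Set.Ioi z, (Real.sqrt (2 * Real.pi))⁻¹ * Real.exp (-t ^ 2 / 2)

lemma gaussQ_zero : gaussQ 0 = 1/2 := by
  unfold gaussQ
  rw [MeasureTheory.integral_const_mul]
  have h : ∀ t : ℝ, Real.exp (-t ^ 2 / 2) = Real.exp (-(1/2) * t ^ 2) := by
    intro t; ring_nf
  simp_rw [h]
  rw [integral_gaussian_Ioi]
  rw [show (π / (1/2)) = 2 * π by ring]
  rw [inv_mul_eq_div, div_div, div_eq_iff (by positivity)]
  ring

lemma qδ_pos (δ qδ : ℝ) (hδ : δ ∈ Set.Ioo (0 : ℝ) (1/2)) (hq : gaussQ qδ = δ) :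
    0 < qδ := by
  by_contra hle
  push_neg at hle
  have hint : MeasureTheory.IntegrableOn
      (fun t : ℝ => (Real.sqrt (2 * Real.pi))⁻¹ * Real.exp (-t ^ 2 / 2)) (Set.Ioi qδ) := by
    have h : ∀ t : ℝ, (Real.sqrt (2 * Real.pi))⁻¹ * Real.exp (-t ^ 2 / 2)
        = (Real.sqrt (2 * Real.pi))⁻¹ * Real.exp (-(1/2) * t ^ 2) := by
      intro t; ring_nf
    simp_rw [h]
    exact ((integrable_exp_neg_mul_sq (by norm_num : (0:ℝ) < 1/2)).const_mul _).integrableOn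
  have hmono : gaussQ 0 ≤ gaussQ qδ := by
    unfold gaussQ
    apply MeasureTheory.setIntegral_mono_set hint
    · filter_upwards with t using by positivity
    · exact HasSubset.Subset.eventuallyLE (Set.Ioi_subset_Ioi hle)
  rw [gaussQ_zero, hq] at hmono
  linarith [hδ.2]

lemma phi_mono (ρA : ℝ) (hρA : 0 < ρA)
    {w₁ w₂ b₁ b₂ ρ₁ ρ₂ k₁ k₂ : ℝ}
    (hw₁ : 0 < w₁) (hw : w₁ ≤ w₂) (hb₁ : 0 < b₁) (hb : b₁ ≤ b₂)
    (hρ₁ : 0 < ρ₁) (hρ : ρ₁ ≤ ρ₂) (hk₁ : 1 ≤ k₁) (hk : k₁ ≤ k₂)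
    (hstrict : w₁ < w₂ ∨ b₁ < b₂ ∨ ρ₁ < ρ₂ ∨ k₁ < k₂) :
    (w₁/ρA)*b₁*(1 + k₁*ρA*ρ₁/(w₁*ρ₁+ρA)) < (w₂/ρA)*b₂*(1 + k₂*ρA*ρ₂/(w₂*ρ₂+ρA)) := by
  have hw₂ : 0 < w₂ := hw₁.trans_le hw
  have hρ₂ : 0 < ρ₂ := hρ₁.trans_le hρ
  have hb₂ : 0 < b₂ := hb₁.trans_le hb
  have hk₂ : 1 ≤ k₂ := hk₁.trans hk
  have hd₁ : 0 < w₁*ρ₁+ρA := by positivity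
  have hd₂ : 0 < w₂*ρ₂+ρA := by positivity
  set t₁ := w₁*ρ₁/(w₁*ρ₁+ρA) with ht₁def
  set t₂ := w₂*ρ₂/(w₂*ρ₂+ρA) with ht₂def
  have ht₁pos : 0 < t₁ := by rw [ht₁def]; positivity
  have ht₂pos : 0 < t₂ := by rw [ht₂def]; positivity
  have hwρ : w₁*ρ₁ ≤ w₂*ρ₂ := mul_le_mul hw hρ hρ₁.le hw₂.le
  have ht : t₁ ≤ t₂ := by
    rw [ht₁def, ht₂def, div_le_div_iff₀ hd₁ hd₂]; nlinarith
  have htstrict : w₁*ρ₁ < w₂*ρ₂ → t₁ < t₂ := by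
    intro h
    rw [ht₁def, ht₂def, div_lt_div_iff₀ hd₁ hd₂]; nlinarith
  have hrw : ∀ w b ρ k : ℝ, (w/ρA)*b*(1 + k*ρA*ρ/(w*ρ+ρA))
      = (b/ρA)*(w + k*ρA*(w*ρ/(w*ρ+ρA))) := by intro w b ρ k; ring
  rw [hrw, hrw]
  have hkρA : k₁*ρA ≤ k₂*ρA := mul_le_mul_of_nonneg_right hk hρA.le
  have hkρApos : 0 < k₁*ρA := by positivity
  have hf₁pos : 0 < w₁ + k₁*ρA*t₁ := by positivity
  have hkt : k₁*ρA*t₁ ≤ k₂*ρA*t₂ :=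
    mul_le_mul hkρA ht ht₁pos.le (by positivity)
  have hf : w₁ + k₁*ρA*t₁ ≤ w₂ + k₂*ρA*t₂ := by linarith
  have hf₂pos : 0 < w₂ + k₂*ρA*t₂ := lt_of_lt_of_le hf₁pos hf
  have hbb : b₁/ρA ≤ b₂/ρA := by gcongr
  have hb₁pos : 0 < b₁/ρA := by positivity
  have case_f : w₁ + k₁*ρA*t₁ < w₂ + k₂*ρA*t₂ →
      (b₁/ρA)*(w₁ + k₁*ρA*t₁) < (b₂/ρA)*(w₂ + k₂*ρA*t₂) := fun hfs =>
    (mul_lt_mul_of_pos_left hfs hb₁pos).trans_le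
      (mul_le_mul_of_nonneg_right hbb hf₂pos.le)
  have case_kt : k₁*ρA*t₁ < k₂*ρA*t₂ →
      (b₁/ρA)*(w₁ + k₁*ρA*t₁) < (b₂/ρA)*(w₂ + k₂*ρA*t₂) := fun h =>
    case_f (by linarith)
  rcases hstrict with h | h | h | h
  · exact case_f (by
      have := htstrict (by nlinarith)
      have : k₁*ρA*t₁ ≤ k₁*ρA*t₂ := mul_le_mul_of_nonneg_left this.le hkρApos.le
      linarith)
  · have hbs : b₁/ρA < b₂/ρA := by gcongr
    exact (mul_le_mul_of_nonneg_left hf hb₁pos.le).trans_lt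
      (mul_lt_mul_of_pos_right hbs hf₂pos)
  · exact case_kt <| lt_of_lt_of_le
      (mul_lt_mul_of_pos_left (htstrict (by nlinarith)) hkρApos)
      (mul_le_mul_of_nonneg_right hkρA ht₂pos.le)
  · exact case_kt <| lt_of_lt_of_le
      (by
        have : k₁*ρA < k₂*ρA := mul_lt_mul_of_pos_right h hρA
        exact mul_lt_mul_of_pos_right this ht₁pos)
      (mul_le_mul_of_nonneg_left ht (by positivity))

/-- Master comparison lemma: `Ξ` is (strictly) decreasing in `N` and
increasing in `ρ_E`, `K`, `B`. -/
lemma xi_master (ρA qδ : ℝ) (hρA : 0 < ρA) (hqδ : 0 < qδ)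
    (N₁ N₂ ρ₁ ρ₂ B₁ B₂ : ℝ) (K₁ K₂ : ℕ)
    (hN₂ : 0 < N₂) (hN : N₂ ≤ N₁) (hρ₁ : 0 < ρ₁) (hρ : ρ₁ ≤ ρ₂)
    (hB₁ : 0 < B₁) (hB : B₁ ≤ B₂) (hK₁ : 1 ≤ K₁) (hK : K₁ ≤ K₂)
    (hstrict : N₂ < N₁ ∨ ρ₁ < ρ₂ ∨ B₁ < B₂ ∨ K₁ < K₂) :
    (Real.exp (qδ / Real.sqrt N₁ + (B₁ / N₁) * Real.log 2) / ρA) *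
        (qδ / (2 * Real.sqrt N₁) + (B₁ / N₁) * Real.log 2) *
        (1 + (K₁ : ℝ) * ρA * ρ₁ /
          (Real.exp (qδ / Real.sqrt N₁ + (B₁ / N₁) * Real.log 2) * ρ₁ + ρA)) - 1 <
    (Real.exp (qδ / Real.sqrt N₂ + (B₂ / N₂) * Real.log 2) / ρA) *
        (qδ / (2 * Real.sqrt N₂) + (B₂ / N₂) * Real.log 2) *
        (1 + (K₂ : ℝ) * ρA * ρ₂ /
          (Real.exp (qδ / Real.sqrt N₂ + (B₂ / N₂) * Real.log 2) * ρ₂ + ρA)) - 1 := by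
  have hN₁ : 0 < N₁ := hN₂.trans_le hN
  have hs₁ : 0 < Real.sqrt N₁ := Real.sqrt_pos.mpr hN₁
  have hs₂ : 0 < Real.sqrt N₂ := Real.sqrt_pos.mpr hN₂
  have hs : Real.sqrt N₂ ≤ Real.sqrt N₁ := Real.sqrt_le_sqrt hN
  have hlog : 0 < Real.log 2 := Real.log_pos one_lt_two
  have hBN : B₁ / N₁ * Real.log 2 ≤ B₂ / N₂ * Real.log 2 := by
    have : B₁ / N₁ ≤ B₂ / N₂ := by
      calc B₁ / N₁ ≤ B₁ / N₂ := by gcongr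
        _ ≤ B₂ / N₂ := by gcongr
    exact mul_le_mul_of_nonneg_right this hlog.le
  have ha : qδ / Real.sqrt N₁ + (B₁ / N₁) * Real.log 2 ≤
      qδ / Real.sqrt N₂ + (B₂ / N₂) * Real.log 2 := by
    have : qδ / Real.sqrt N₁ ≤ qδ / Real.sqrt N₂ := by gcongr
    linarith
  have hb : qδ / (2 * Real.sqrt N₁) + (B₁ / N₁) * Real.log 2 ≤
      qδ / (2 * Real.sqrt N₂) + (B₂ / N₂) * Real.log 2 := by
    have : qδ / (2 * Real.sqrt N₁) ≤ qδ / (2 * Real.sqrt N₂) := by gcongr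
    linarith
  have hb₁pos : 0 < qδ / (2 * Real.sqrt N₁) + (B₁ / N₁) * Real.log 2 := by
    have h1 : 0 < qδ / (2 * Real.sqrt N₁) := div_pos hqδ (by linarith)
    have h2 : 0 < B₁ / N₁ * Real.log 2 := mul_pos (div_pos hB₁ hN₁) hlog
    linarith
  apply sub_lt_sub_right
  apply phi_mono ρA hρA (Real.exp_pos _)
    (Real.exp_le_exp.mpr ha) hb₁pos hb hρ₁ hρ
    (by exact_mod_cast hK₁) (by exact_mod_cast hK)
  rcases hstrict with h | h | h | h
  · left
    apply Real.exp_lt_exp.mpr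
    have hss : Real.sqrt N₂ < Real.sqrt N₁ := Real.sqrt_lt_sqrt hN₂.le h
    have : qδ / Real.sqrt N₁ < qδ / Real.sqrt N₂ := by gcongr
    linarith
  · right; right; left; exact h
  · left
    apply Real.exp_lt_exp.mpr
    have : B₁ / N₁ * Real.log 2 < B₂ / N₂ * Real.log 2 := by
      have : B₁ / N₁ < B₂ / N₂ := by
        calc B₁ / N₁ ≤ B₁ / N₂ := by gcongr
          _ < B₂ / N₂ := by gcongr
      exact mul_lt_mul_of_pos_right this hlog
    have : qδ / Real.sqrt N₁ ≤ qδ / Real.sqrt N₂ := by gcongr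
    linarith
  · right; right; right; exact_mod_cast h

/-- `Ξ` is strictly increasing in `ρ_E`, in `K_E`, and in `B` (for
fixed `N`); consequently the unique root `N*` of `Ξ = 0` is strictly increasing
in each of these parameters. -/
theorem xi_monotone_in_parameters (ρA δ qδ : ℝ)
    (hρA : 0 < ρA) (hδ : δ ∈ Set.Ioo (0 : ℝ) (1 / 2)) (hq : gaussQ qδ = δ)
    (Ξ : ℝ → ℝ → ℕ → ℝ → ℝ)
    (hΞ : Ξ = fun (N ρE : ℝ) (K : ℕ) (B : ℝ) =>
      (Real.exp (qδ / Real.sqrt N + (B / N) * Real.log 2) / ρA) *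
        (qδ / (2 * Real.sqrt N) + (B / N) * Real.log 2) *
        (1 + (K : ℝ) * ρA * ρE /
          (Real.exp (qδ / Real.sqrt N + (B / N) * Real.log 2) * ρE + ρA)) - 1) :
    (∀ N B : ℝ, 0 < N → 0 < B → ∀ K : ℕ, 1 ≤ K →
      StrictMonoOn (fun ρE => Ξ N ρE K B) (Set.Ioi 0)) ∧
    (∀ N B ρE : ℝ, 0 < N → 0 < B → 0 < ρE → ∀ K₁ K₂ : ℕ, 1 ≤ K₁ → K₁ < K₂ →
      Ξ N ρE K₁ B < Ξ N ρE K₂ B) ∧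
    (∀ N ρE : ℝ, 0 < N → 0 < ρE → ∀ K : ℕ, 1 ≤ K →
      StrictMonoOn (fun B => Ξ N ρE K B) (Set.Ioi 0)) ∧
    (∀ ρE₁ ρE₂ B : ℝ, 0 < ρE₁ → ρE₁ < ρE₂ → 0 < B → ∀ K : ℕ, 1 ≤ K →
      ∀ N₁ N₂ : ℝ, 0 < N₁ → 0 < N₂ →
        Ξ N₁ ρE₁ K B = 0 → Ξ N₂ ρE₂ K B = 0 → N₁ < N₂) ∧
    (∀ ρE B : ℝ, 0 < ρE → 0 < B → ∀ K₁ K₂ : ℕ, 1 ≤ K₁ → K₁ < K₂ →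
      ∀ N₁ N₂ : ℝ, 0 < N₁ → 0 < N₂ →
        Ξ N₁ ρE K₁ B = 0 → Ξ N₂ ρE K₂ B = 0 → N₁ < N₂) ∧
    (∀ ρE B₁ B₂ : ℝ, 0 < ρE → 0 < B₁ → B₁ < B₂ → ∀ K : ℕ, 1 ≤ K →
      ∀ N₁ N₂ : ℝ, 0 < N₁ → 0 < N₂ →
        Ξ N₁ ρE K B₁ = 0 → Ξ N₂ ρE K B₂ = 0 → N₁ < N₂) := by
  have hqδ : 0 < qδ := qδ_pos δ qδ hδ hq
  refine ⟨?_, ?_, ?_, ?_, ?_, ?_⟩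
  · intro N B hN hB K hK x hx y hy hxy
    simp only [hΞ]
    exact xi_master ρA qδ hρA hqδ N N x y B B K K hN le_rfl hx hxy.le hB le_rfl hK le_rfl
      (Or.inr (Or.inl hxy))
  · intro N B ρE hN hB hρE K₁ K₂ hK₁ hK
    simp only [hΞ]
    exact xi_master ρA qδ hρA hqδ N N ρE ρE B B K₁ K₂ hN le_rfl hρE le_rfl hB le_rfl hK₁ hK.le
      (Or.inr (Or.inr (Or.inr hK)))
  · intro N ρE hN hρE K hK x hx y hy hxy
    simp only [hΞ]
    exact xi_master ρA qδ hρA hqδ N N ρE ρE x y K K hN le_rfl hρE le_rfl hx hxy.le hK le_rfl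
      (Or.inr (Or.inr (Or.inl hxy)))
  · intro ρE₁ ρE₂ B hρ₁ hρ hB K hK N₁ N₂ hN₁ hN₂ h₁ h₂
    by_contra hc
    push_neg at hc
    have := xi_master ρA qδ hρA hqδ N₁ N₂ ρE₁ ρE₂ B B K K hN₂ hc hρ₁ hρ.le hB le_rfl hK le_rfl
      (Or.inr (Or.inl hρ))
    simp only [hΞ] at h₁ h₂
    linarith
  · intro ρE B hρE hB K₁ K₂ hK₁ hK N₁ N₂ hN₁ hN₂ h₁ h₂
    by_contra hc
    push_neg at hc
    have := xi_master ρA qδ hρA hqδ N₁ N₂ ρE ρE B B K₁ K₂ hN₂ hc hρE le_rfl hB le_rfl hK₁ hK.le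
      (Or.inr (Or.inr (Or.inr hK)))
    simp only [hΞ] at h₁ h₂
    linarith
  · intro ρE B₁ B₂ hρE hB₁ hB K hK N₁ N₂ hN₁ hN₂ h₁ h₂
    by_contra hc
    push_neg at hc
    have := xi_master ρA qδ hρA hqδ N₁ N₂ ρE ρE B₁ B₂ K K hN₂ hc hρE le_rfl hB₁ hB.le hK le_rfl
      (Or.inr (Or.inr (Or.inl hB)))
    simp only [hΞ] at h₁ h₂
    linarith
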